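/- Let n ∈ ℕ and let s be an integer with 1 ≤ s ≤ m_n − 1. Then s·M_n·K_{s·M_n} = ∑_{l=0}^{s−1} ( ∑_{t=0}^{l−1} r_n^t ) · M_n · D_{M_n} + ( ∑_{l=0}^{s−1} r_n^l ) · M_n · K_{M_n} (as functions on G_m, with the empty sum equal to 0). -/
import Mathlib


open Finset
open scoped ENNReal NNReal

noncomputable section

namespace Vilenkin

/-- The generalized powers `M_0 = 1`, `M_{k+1} = m_k M_k`. -/
def M (m : ℕ → ℕ) : ℕ → ℕ
  | 0 => 1
  | k + 1 => m k * M m k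

/-- The `j`-th digit of `n` in the mixed-radix system determined by `m`. -/
def digit (m : ℕ → ℕ) (n j : ℕ) : ℕ := (n / M m j) % m j

/-- The Vilenkin group `G_m`, the complete direct product of the cyclic groups `Z_{m_k}`. -/
abbrev G (m : ℕ → ℕ) : Type := ∀ k : ℕ, ZMod (m k)

instance (n : ℕ) : MeasurableSpace (ZMod n) := ⊤

/-- The generalized Rademacher functions `r_k(x) = exp(2 π i x_k / m_k)`. -/
def rad (m : ℕ → ℕ) (k : ℕ) (x : G m) : ℂ :=
  Complex.exp (2 * Real.pi * Complex.I * ((x k).val : ℂ) / (m k : ℂ))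

/-- The Vilenkin system `ψ_n = ∏_k r_k^{n_k}` (the product is finite). -/
def psi (m : ℕ → ℕ) (n : ℕ) (x : G m) : ℂ :=
  ∏ j ∈ Finset.range (n + 1), rad m j x ^ digit m n j

/-- The Dirichlet kernels `D_n = ∑_{k=0}^{n-1} ψ_k`. -/
def D (m : ℕ → ℕ) (n : ℕ) (x : G m) : ℂ :=
  ∑ k ∈ Finset.range n, psi m k x

/-- The Fejér kernels `K_n = (1/n) ∑_{k=0}^{n-1} D_k`. -/
def K (m : ℕ → ℕ) (n : ℕ) (x : G m) : ℂ :=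
  (n : ℂ)⁻¹ * ∑ k ∈ Finset.range n, D m k x

/-- The cylinder `I_n(x) = {y : y_j = x_j for j < n}`. -/
def cyl (m : ℕ → ℕ) (n : ℕ) (x : G m) : Set (G m) := {y | ∀ j < n, y j = x j}

/-- The element `e_n` with `n`-th coordinate `1` and all other coordinates `0`. -/
def e (m : ℕ → ℕ) (n : ℕ) : G m := fun k => if k = n then 1 else 0


lemma M_pos (m : ℕ → ℕ) (hm : ∀ k, 2 ≤ m k) (k : ℕ) : 0 < M m k := by
  induction k with
  | zero => simp [M]
  | succ k ih =>
    have := hm k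
    simp only [M]
    exact Nat.mul_pos (by omega) ih

lemma lt_M (m : ℕ → ℕ) (hm : ∀ k, 2 ≤ m k) (k : ℕ) : k < M m k := by
  induction k with
  | zero => simp [M]
  | succ k ih =>
    have h2 : 2 * M m k ≤ M m (k + 1) := by
      simp only [M]; exact Nat.mul_le_mul_right _ (hm k)
    omega

lemma M_dvd (m : ℕ → ℕ) {j k : ℕ} (h : j ≤ k) : M m j ∣ M m k := by
  induction k with
  | zero =>
    have : j = 0 := by omega
    subst this; rfl
  | succ k ih =>
    rcases Nat.lt_or_ge j (k + 1) with h' | h'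
    · exact (ih (by omega)).mul_left (m k)
    · have : j = k + 1 := by omega
      subst this; rfl

lemma digit_eq_zero_of_lt (m : ℕ → ℕ) {t j : ℕ} (h : t < M m j) : digit m t j = 0 := by
  simp [digit, Nat.div_eq_of_lt h]

lemma psi_eq_prod (m : ℕ → ℕ) (hm : ∀ k, 2 ≤ m k) (n : ℕ) (x : G m) {N : ℕ} (hN : n < N) :
    psi m n x = ∏ j ∈ Finset.range N, rad m j x ^ digit m n j := by
  have h : (n + 1) + (N - (n + 1)) = N := by omega
  rw [psi]
  conv_rhs => rw [← h, Finset.prod_range_add]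
  have hone : (∏ j ∈ Finset.range (N - (n + 1)),
      rad m (n + 1 + j) x ^ digit m n (n + 1 + j)) = 1 := by
    apply Finset.prod_eq_one
    intro j _
    have h1 : n < M m (n + 1 + j) := lt_of_le_of_lt (by omega) (lt_M m hm (n + 1 + j))
    rw [digit_eq_zero_of_lt m h1, pow_zero]
  rw [hone, mul_one]

lemma digit_shift_lt (m : ℕ → ℕ) (hm : ∀ k, 2 ≤ m k) {n l i j : ℕ} (hj : j < n) :
    digit m (l * M m n + i) j = digit m i j := by
  obtain ⟨c, hc⟩ := M_dvd m (show j + 1 ≤ n from hj)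
  have hMj : 0 < M m j := M_pos m hm j
  have heq : l * M m n + i = i + (l * (m j * c)) * M m j := by
    rw [hc]; simp only [M]; ring
  rw [digit, heq, Nat.add_mul_div_right _ _ hMj, digit,
    show l * (m j * c) = l * c * m j by ring]
  exact Nat.add_mul_mod_self_right _ _ _

lemma digit_shift_self (m : ℕ → ℕ) (hm : ∀ k, 2 ≤ m k) {n l i : ℕ}
    (hi : i < M m n) (hl : l < m n) :
    digit m (l * M m n + i) n = l := by
  rw [digit, show l * M m n + i = i + l * M m n by ring,
    Nat.add_mul_div_right _ _ (M_pos m hm n), Nat.div_eq_of_lt hi, zero_add,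
    Nat.mod_eq_of_lt hl]

lemma psi_shift (m : ℕ → ℕ) (hm : ∀ k, 2 ≤ m k) (n : ℕ) {l i : ℕ}
    (hi : i < M m n) (hl : l < m n) (x : G m) :
    psi m (l * M m n + i) x = rad m n x ^ l * psi m i x := by
  rcases Nat.eq_zero_or_pos l with rfl | hlpos
  · simp
  have hnk : n < l * M m n + i := by
    have h1 : M m n ≤ l * M m n := Nat.le_mul_of_pos_left _ hlpos
    have := lt_M m hm n
    omega
  rw [psi_eq_prod m hm _ x (Nat.lt_succ_self (l * M m n + i)),
    psi_eq_prod m hm i x (show i < l * M m n + i + 1 by omega)]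
  have hn : n ∈ Finset.range (l * M m n + i + 1) := Finset.mem_range.mpr (by omega)
  rw [← Finset.mul_prod_erase _ _ hn, ← Finset.mul_prod_erase _ _ hn,
    digit_shift_self m hm hi hl, digit_eq_zero_of_lt m hi, pow_zero, one_mul]
  congr 1
  apply Finset.prod_congr rfl
  intro j hj
  obtain ⟨hjn, _⟩ := Finset.mem_erase.mp hj
  rcases Nat.lt_or_ge j n with h' | h'
  · rw [digit_shift_lt m hm h']
  · have hjn' : n < j := by omega
    have hMle : M m (n + 1) ≤ M m j := Nat.le_of_dvd (M_pos m hm j) (M_dvd m hjn')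
    have hk1 : l * M m n + i < M m (n + 1) := by
      have h1 : l * M m n + i < (l + 1) * M m n := by
        have := M_pos m hm n; nlinarith
      have h2 : (l + 1) * M m n ≤ m n * M m n := Nat.mul_le_mul_right _ (by omega)
      simp only [M]; omega
    rw [digit_eq_zero_of_lt m (lt_of_lt_of_le hk1 hMle),
      digit_eq_zero_of_lt m (lt_of_lt_of_le (lt_of_lt_of_le hi (Nat.le_of_dvd (M_pos m hm j) (M_dvd m (le_of_lt hjn')))) le_rfl)]

lemma D_mul (m : ℕ → ℕ) (hm : ∀ k, 2 ≤ m k) (n : ℕ) {l : ℕ} (hl : l ≤ m n) (x : G m) :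
    D m (l * M m n) x = (∑ t ∈ Finset.range l, rad m n x ^ t) * D m (M m n) x := by
  induction l with
  | zero => simp [D]
  | succ l ih =>
    rw [show (l + 1) * M m n = l * M m n + M m n by ring, D, Finset.sum_range_add, ← D,
      ih (by omega)]
    have hcong : ∀ j ∈ Finset.range (M m n), psi m (l * M m n + j) x = rad m n x ^ l * psi m j x :=
      fun j hj => psi_shift m hm n (Finset.mem_range.mp hj) (by omega) x
    rw [Finset.sum_congr rfl hcong, ← Finset.mul_sum, ← D, Finset.sum_range_succ]
    ring

lemma D_decomp (m : ℕ → ℕ) (hm : ∀ k, 2 ≤ m k) (n : ℕ) {l k : ℕ}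
    (hl : l < m n) (hk : k ≤ M m n) (x : G m) :
    D m (l * M m n + k) x =
      (∑ t ∈ Finset.range l, rad m n x ^ t) * D m (M m n) x + rad m n x ^ l * D m k x := by
  rw [D, Finset.sum_range_add, ← D, D_mul m hm n (le_of_lt hl) x]
  congr 1
  have hcong : ∀ j ∈ Finset.range k, psi m (l * M m n + j) x = rad m n x ^ l * psi m j x :=
    fun j hj => psi_shift m hm n (lt_of_lt_of_le (Finset.mem_range.mp hj) hk) hl x
  rw [Finset.sum_congr rfl hcong, ← Finset.mul_sum, D]

lemma sum_range_mul' {α : Type*} [AddCommMonoid α] (f : ℕ → α) (s b : ℕ) :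
    ∑ j ∈ Finset.range (s * b), f j =
      ∑ l ∈ Finset.range s, ∑ i ∈ Finset.range b, f (l * b + i) := by
  induction s with
  | zero => simp
  | succ s ih =>
    rw [show (s + 1) * b = s * b + b by ring, Finset.sum_range_add, ih,
      Finset.sum_range_succ]

/-- decomposition of `s M_n K_{s M_n}`. -/
theorem statement4 (m : ℕ → ℕ) (hm : ∀ k, 2 ≤ m k) (n s : ℕ)
    (hs1 : 1 ≤ s) (hs2 : s ≤ m n - 1) (x : G m) :
    ((s * M m n : ℕ) : ℂ) * K m (s * M m n) x =
      (∑ l ∈ Finset.range s, ∑ t ∈ Finset.range l, rad m n x ^ t) *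
          (M m n : ℂ) * D m (M m n) x
        + (∑ l ∈ Finset.range s, rad m n x ^ l) * (M m n : ℂ) * K m (M m n) x := by
  have hMpos : 0 < M m n := M_pos m hm n
  have h2 := hm n
  have hsM : (s * M m n : ℕ) ≠ 0 := by positivity
  have hKM : (∑ i ∈ Finset.range (M m n), D m i x) = (M m n : ℂ) * K m (M m n) x := by
    rw [K, ← mul_assoc, mul_inv_cancel₀ (Nat.cast_ne_zero.mpr hMpos.ne'), one_mul]
  rw [K, ← mul_assoc, mul_inv_cancel₀ (Nat.cast_ne_zero.mpr hsM), one_mul,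
    sum_range_mul']
  have hD : ∀ l ∈ Finset.range s,
      (∑ i ∈ Finset.range (M m n), D m (l * M m n + i) x) =
        (M m n : ℂ) * ((∑ t ∈ Finset.range l, rad m n x ^ t) * D m (M m n) x)
          + rad m n x ^ l * ((M m n : ℂ) * K m (M m n) x) := by
    intro l hl
    have hls : l < m n := by
      have := Finset.mem_range.mp hl; omega
    have : ∀ i ∈ Finset.range (M m n),
        D m (l * M m n + i) x =
          (∑ t ∈ Finset.range l, rad m n x ^ t) * D m (M m n) x + rad m n x ^ l * D m i x :=
      fun i hi => D_decomp m hm n hls (le_of_lt (Finset.mem_range.mp hi)) x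
    rw [Finset.sum_congr rfl this, Finset.sum_add_distrib, Finset.sum_const,
      Finset.card_range, nsmul_eq_mul, ← Finset.mul_sum, hKM]
  rw [Finset.sum_congr rfl hD, Finset.sum_add_distrib, ← Finset.mul_sum, ← Finset.sum_mul,
    ← Finset.sum_mul]
  ring


end Vilenkin

end
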